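/- Let n ≥ 2, let φ : [0,∞) → ℝ be continuous, let Ω ⊆ 𝔹ⁿ be a measurable set whose closure is a compact subset of 𝔹ⁿ, and let R > 0 be such that η_φ(Ω) = η_φ(B_R(o)). (i) If v : [0,∞) → ℝ is nondecreasing and bounded on bounded sets, then ∫_Ω v(d(x)) dη_φ(x) ≥ ∫_{B_R(o)} v(d(x)) dη_φ(x). (ii) If u : [0,∞) → ℝ is nonincreasing and bounded on bounded sets, then ∫_Ω u(d(x)) dη_φ(x) ≤ ∫_{B_R(o)} u(d(x)) dη_φ(x). Moreover, if v (respectively u) is strictly increasing (respectively strictly decreasing), then equality in (i) (respectively (ii)) holds if and only if the symmetric difference of Ω and B_R(o) has Lebesgue measure zero. -/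

import Mathlib

/-!
A bathtub argument. Write `B = B_R(o)`. Since `η_φ(Ω) = η_φ(B)` is finite, the pieces `Ω \ B` and
`B \ Ω` have the same weighted measure `m`, while `d ≥ R` on the first and `d < R` on the second.
For monotone `v` the integral of `v ∘ d` over `Ω \ B` is therefore at least `v(R) m`, and over
`B \ Ω` at most `v(R) m`; the integrals over `Ω ∩ B` cancel. If `v` is strictly monotone, equality
forces `η_φ(B \ Ω) = 0`, hence `η_φ(Ω ∆ B) = 0`, and this is a Lebesgue null set because the
density of `η_φ` is positive on the ball.
-/

open MeasureTheory Set Metric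

/-- The conformal factor `λ(x) = 2 / (1 - ‖x‖²)` of the Poincaré ball model of `ℍⁿ`. -/
noncomputable def confFactor (n : ℕ) (x : EuclideanSpace ℝ (Fin n)) : ℝ :=
  2 / (1 - ‖x‖ ^ 2)

/-- The hyperbolic distance from the origin in the Poincaré ball model:
`d(x) = log ((1 + ‖x‖) / (1 - ‖x‖))`. -/
noncomputable def hypDist (n : ℕ) (x : EuclideanSpace ℝ (Fin n)) : ℝ :=
  Real.log ((1 + ‖x‖) / (1 - ‖x‖))

/-- The weighted measure `η_φ` on the Poincaré ball, with density
`x ↦ λ(x)ⁿ e^{-φ(d(x))}` with respect to Lebesgue measure. -/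
noncomputable def hypWMeasure (n : ℕ) (φ : ℝ → ℝ) : Measure (EuclideanSpace ℝ (Fin n)) :=
  volume.withDensity fun x =>
    ENNReal.ofReal (confFactor n x ^ n * Real.exp (-φ (hypDist n x)))

/-- The geodesic ball of radius `R` centered at the origin of the Poincaré ball model,
i.e. the Euclidean ball of radius `tanh (R/2)`. -/
noncomputable def geoBall (n : ℕ) (R : ℝ) : Set (EuclideanSpace ℝ (Fin n)) :=
  ball (0 : EuclideanSpace ℝ (Fin n)) (Real.tanh (R / 2))

open Real
open scoped ENNReal

section Bathtub

variable {X : Type*} [MeasurableSpace X] {μ : Measure X} {s t : Set X} {f : X → ℝ} {c : ℝ}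

lemma setIntegral_le_setIntegral_of_le_of_le (hs : MeasurableSet s) (ht : MeasurableSet t)
    (hμ : μ s = μ t) (hfin : μ s ≠ ∞) (hfs : IntegrableOn f s μ) (hft : IntegrableOn f t μ)
    (hle : ∀ x ∈ s, f x ≤ c) (hge : ∀ x ∈ t, c ≤ f x) :
    ∫ x in s, f x ∂μ ≤ ∫ x in t, f x ∂μ :=
  calc ∫ x in s, f x ∂μ ≤ ∫ _ in s, c ∂μ :=
        setIntegral_mono_on hfs (integrableOn_const hfin) hs hle
    _ = ∫ _ in t, c ∂μ := by simp only [setIntegral_const, measureReal_def, hμ]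
    _ ≤ ∫ x in t, f x ∂μ :=
        setIntegral_mono_on (integrableOn_const (hμ ▸ hfin)) hft ht hge

lemma setIntegral_lt_setIntegral_of_lt_of_le (hs : MeasurableSet s) (ht : MeasurableSet t)
    (hμ : μ s = μ t) (hfin : μ s ≠ ∞) (hpos : μ s ≠ 0) (hfs : IntegrableOn f s μ)
    (hft : IntegrableOn f t μ) (hlt : ∀ x ∈ s, f x < c) (hge : ∀ x ∈ t, c ≤ f x) :
    ∫ x in s, f x ∂μ < ∫ x in t, f x ∂μ := by
  have hc : IntegrableOn (fun _ => c) s μ := integrableOn_const hfin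
  have hgap : 0 < ∫ x in s, (c - f x) ∂μ := by
    rw [setIntegral_pos_iff_support_of_nonneg_ae
      (ae_restrict_of_forall_mem hs fun x hx => sub_nonneg.2 (hlt x hx).le) (hc.sub hfs)]
    exact (pos_iff_ne_zero.2 hpos).trans_le
      (measure_mono fun x hx => ⟨sub_ne_zero.2 (hlt x hx).ne', hx⟩)
  calc ∫ x in s, f x ∂μ < ∫ _ in s, c ∂μ := by
        rw [integral_sub hc hfs] at hgap; linarith
    _ = ∫ _ in t, c ∂μ := by simp only [setIntegral_const, measureReal_def, hμ]
    _ ≤ ∫ x in t, f x ∂μ :=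
        setIntegral_mono_on (integrableOn_const (hμ ▸ hfin)) hft ht hge

lemma setIntegral_sub_setIntegral_eq_sdiff (hs : MeasurableSet s) (ht : MeasurableSet t)
    (hfs : IntegrableOn f s μ) (hft : IntegrableOn f t μ) :
    ∫ x in t, f x ∂μ - ∫ x in s, f x ∂μ = ∫ x in t \ s, f x ∂μ - ∫ x in s \ t, f x ∂μ := by
  rw [← integral_inter_add_sdiff hs hft, ← integral_inter_add_sdiff ht hfs, inter_comm]
  ring

theorem setIntegral_le_setIntegral_of_sdiff_le_of_le (hs : MeasurableSet s) (ht : MeasurableSet t)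
    (hμ : μ s = μ t) (hfin : μ s ≠ ∞) (hfs : IntegrableOn f s μ) (hft : IntegrableOn f t μ)
    (hle : ∀ x ∈ t \ s, f x ≤ c) (hge : ∀ x ∈ s \ t, c ≤ f x) :
    ∫ x in t, f x ∂μ ≤ ∫ x in s, f x ∂μ := by
  have hμ' : μ (t \ s) = μ (s \ t) :=
    (measure_sdiff_symm hs.nullMeasurableSet ht.nullMeasurableSet hμ
      (measure_ne_top_of_subset inter_subset_left hfin)).symm
  have := setIntegral_le_setIntegral_of_le_of_le (ht.diff hs) (hs.diff ht) hμ'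
    (measure_ne_top_of_subset sdiff_subset (hμ ▸ hfin))
    (hft.mono_set sdiff_subset) (hfs.mono_set sdiff_subset) hle hge
  linarith [setIntegral_sub_setIntegral_eq_sdiff hs ht hfs hft]

theorem setIntegral_eq_setIntegral_iff_of_sdiff_lt_of_le (hs : MeasurableSet s)
    (ht : MeasurableSet t) (hμ : μ s = μ t) (hfin : μ s ≠ ∞) (hfs : IntegrableOn f s μ)
    (hft : IntegrableOn f t μ) (hlt : ∀ x ∈ t \ s, f x < c) (hge : ∀ x ∈ s \ t, c ≤ f x) :
    ∫ x in s, f x ∂μ = ∫ x in t, f x ∂μ ↔ μ (symmDiff s t) = 0 := by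
  refine ⟨fun heq => ?_, fun h => setIntegral_congr_set (measure_symmDiff_eq_zero_iff.1 h)⟩
  have hμ' : μ (t \ s) = μ (s \ t) :=
    (measure_sdiff_symm hs.nullMeasurableSet ht.nullMeasurableSet hμ
      (measure_ne_top_of_subset inter_subset_left hfin)).symm
  have hts : μ (t \ s) = 0 := by
    by_contra hpos
    have := setIntegral_lt_setIntegral_of_lt_of_le (ht.diff hs) (hs.diff ht) hμ'
      (measure_ne_top_of_subset sdiff_subset (hμ ▸ hfin)) hpos
      (hft.mono_set sdiff_subset) (hfs.mono_set sdiff_subset) hlt hge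
    linarith [setIntegral_sub_setIntegral_eq_sdiff hs ht hfs hft]
  rw [Set.symmDiff_def, measure_union_null_iff]
  exact ⟨hμ'.symm.trans hts, hts⟩

end Bathtub

section PoincareBall

noncomputable def hypDensity (n : ℕ) (φ : ℝ → ℝ) (x : EuclideanSpace ℝ (Fin n)) : ℝ :=
  confFactor n x ^ n * exp (-φ (hypDist n x))

lemma hypWMeasure_eq_withDensity (n : ℕ) (φ : ℝ → ℝ) :
    hypWMeasure n φ = volume.withDensity fun x => ENNReal.ofReal (hypDensity n φ x) :=
  rfl

variable {n : ℕ} {φ : ℝ → ℝ}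

lemma hypDist_eq_two_mul_artanh {x : EuclideanSpace ℝ (Fin n)} (hx : ‖x‖ ≤ 1) :
    hypDist n x = 2 * artanh ‖x‖ := by
  rw [hypDist, artanh_eq_half_log ⟨by linarith [norm_nonneg x], hx⟩]
  ring

lemma hypDist_nonneg (x : EuclideanSpace ℝ (Fin n)) : 0 ≤ hypDist n x := by
  rcases le_or_gt ‖x‖ 1 with hx | hx
  · rw [hypDist_eq_two_mul_artanh hx]
    exact mul_nonneg zero_le_two (artanh_nonneg (norm_nonneg x))
  · -- here the ratio is below `-1`, and `Real.log` takes the logarithm of its absolute value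
    refine (log_pos_of_lt_neg_one ?_).le
    rw [div_lt_iff_of_neg (by linarith)]
    linarith

lemma hypDist_le_of_norm_le {x : EuclideanSpace ℝ (Fin n)} {r : ℝ} (hx : ‖x‖ ≤ r) (hr : r < 1) :
    hypDist n x ≤ 2 * artanh r := by
  rw [hypDist_eq_two_mul_artanh (hx.trans hr.le)]
  gcongr
  exact artanh_le_artanh (by linarith [norm_nonneg x]) hr hx

lemma measurable_hypDist : Measurable (hypDist n) := by
  unfold hypDist
  fun_prop

lemma continuousOn_hypDist : ContinuousOn (hypDist n) (ball 0 1) := by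
  have hpos : ∀ x ∈ ball (0 : EuclideanSpace ℝ (Fin n)) 1, 0 < 1 - ‖x‖ :=
    fun x hx => sub_pos.2 (mem_ball_zero_iff.1 hx)
  unfold hypDist
  refine ContinuousOn.log (by fun_prop (disch := exact fun x hx => (hpos x hx).ne'))
    fun x hx => (div_pos (by linarith [norm_nonneg x]) (hpos x hx)).ne'

lemma mem_geoBall_iff {R : ℝ} {x : EuclideanSpace ℝ (Fin n)} (hx : ‖x‖ < 1) :
    x ∈ geoBall n R ↔ hypDist n x < R := by
  rw [geoBall, mem_ball_zero_iff, hypDist_eq_two_mul_artanh hx.le, ← lt_div_iff₀' two_pos,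
    ← artanh_lt_artanh_iff ⟨by linarith [norm_nonneg x], hx⟩
      ⟨neg_one_lt_tanh _, tanh_lt_one _⟩, artanh_tanh]

lemma closure_geoBall_subset_ball (R : ℝ) : closure (geoBall n R) ⊆ ball 0 1 :=
  closure_ball_subset_closedBall.trans (closedBall_subset_ball (tanh_lt_one _))

lemma hypDensity_pos (φ : ℝ → ℝ) {x : EuclideanSpace ℝ (Fin n)} (hx : ‖x‖ < 1) :
    0 < hypDensity n φ x := by
  have : 0 < 1 - ‖x‖ ^ 2 := by nlinarith [norm_nonneg x]
  unfold hypDensity confFactor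
  positivity

lemma measurable_hypDensity (hφ : Measurable φ) : Measurable (hypDensity n φ) := by
  unfold hypDensity confFactor
  have := measurable_hypDist (n := n)
  fun_prop

lemma continuousOn_hypDensity (hφ : Continuous φ) : ContinuousOn (hypDensity n φ) (ball 0 1) := by
  unfold hypDensity confFactor
  have := continuousOn_hypDist (n := n)
  have hpos : ∀ x ∈ ball (0 : EuclideanSpace ℝ (Fin n)) 1, 1 - ‖x‖ ^ 2 ≠ 0 := fun x hx => by
    nlinarith [norm_nonneg x, mem_ball_zero_iff.1 hx]
  fun_prop (disch := assumption)

lemma hypWMeasure_closedBall_lt_top (hφ : Continuous φ) {r : ℝ} (hr : r < 1) :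
    hypWMeasure n φ (closedBall 0 r) < ∞ := by
  rw [hypWMeasure_eq_withDensity, withDensity_apply _ measurableSet_closedBall]
  exact (((continuousOn_hypDensity hφ).mono (closedBall_subset_ball hr)).integrableOn_compact
    (isCompact_closedBall 0 r)).lintegral_lt_top

lemma hypWMeasure_eq_zero_iff (hφ : Measurable φ) {S : Set (EuclideanSpace ℝ (Fin n))}
    (hS : S ⊆ ball 0 1) : hypWMeasure n φ S = 0 ↔ volume S = 0 := by
  rw [hypWMeasure_eq_withDensity,
    withDensity_apply_eq_zero' (measurable_hypDensity hφ).ennreal_ofReal.aemeasurable,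
    inter_eq_self_of_subset_right fun x hx => ?_]
  simpa [ENNReal.ofReal_eq_zero] using hypDensity_pos φ (mem_ball_zero_iff.1 (hS hx))

lemma exists_subset_closedBall_of_closure_subset_ball {S : Set (EuclideanSpace ℝ (Fin n))}
    (hS : closure S ⊆ ball 0 1) : ∃ r < 1, S ⊆ closedBall 0 r := by
  obtain ⟨r, hr, hSr⟩ := exists_lt_subset_ball isClosed_closure hS
  exact ⟨r, hr, subset_closure.trans (hSr.trans ball_subset_closedBall)⟩

lemma hypWMeasure_lt_top (hφ : Continuous φ) {S : Set (EuclideanSpace ℝ (Fin n))}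
    (hS : closure S ⊆ ball 0 1) : hypWMeasure n φ S < ∞ := by
  obtain ⟨r, hr, hSr⟩ := exists_subset_closedBall_of_closure_subset_ball hS
  exact (measure_mono hSr).trans_lt (hypWMeasure_closedBall_lt_top hφ hr)

lemma integrableOn_comp_hypDist (hφ : Continuous φ) {S : Set (EuclideanSpace ℝ (Fin n))}
    (hS : closure S ⊆ ball 0 1) {v : ℝ → ℝ} (hv : MonotoneOn v (Ici 0)) :
    IntegrableOn (fun x => v (hypDist n x)) S (hypWMeasure n φ) := by
  obtain ⟨r, hr, hSr⟩ := exists_subset_closedBall_of_closure_subset_ball hS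
  refine IntegrableOn.mono_set ?_ hSr
  have hmeas : Measurable fun x => v (hypDist n x) := by
    have hv' : Monotone fun t => v (max 0 t) := fun a b hab =>
      hv (le_max_left 0 a) (le_max_left 0 b) (max_le_max le_rfl hab)
    simpa only [Function.comp_def, max_eq_right (hypDist_nonneg _)]
      using hv'.measurable.comp measurable_hypDist
  refine Measure.integrableOn_of_bounded (hypWMeasure_closedBall_lt_top hφ hr).ne
    hmeas.aestronglyMeasurable (M := max |v 0| |v (2 * artanh r)|)
    (ae_restrict_of_forall_mem measurableSet_closedBall fun x hx => ?_)
  have hd := hypDist_le_of_norm_le (mem_closedBall_zero_iff.1 hx) hr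
  have h0 := hypDist_nonneg (n := n) x
  exact abs_le_max_abs_abs (hv self_mem_Ici h0 h0) (hv h0 (h0.trans hd) hd)

end PoincareBall

section Comparison

variable {n : ℕ} {φ : ℝ → ℝ} {Ω : Set (EuclideanSpace ℝ (Fin n))} {R : ℝ} {v : ℝ → ℝ}

lemma hypDist_lt_of_mem_geoBall {x : EuclideanSpace ℝ (Fin n)} (hx : x ∈ geoBall n R) :
    hypDist n x < R :=
  (mem_geoBall_iff ((mem_ball_zero_iff.1 hx).trans (tanh_lt_one _))).1 hx

lemma le_hypDist_of_notMem_geoBall {x : EuclideanSpace ℝ (Fin n)} (hx : ‖x‖ < 1)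
    (hxB : x ∉ geoBall n R) : R ≤ hypDist n x :=
  not_lt.1 fun h => hxB ((mem_geoBall_iff hx).2 h)

-- The threshold is `v (max 0 R)` rather than `v R` because `v` is only monotone on `[0, ∞)`.
lemma apply_hypDist_le_of_mem_geoBall (hv : MonotoneOn v (Ici 0))
    {x : EuclideanSpace ℝ (Fin n)} (hx : x ∈ geoBall n R) : v (hypDist n x) ≤ v (max 0 R) :=
  hv (hypDist_nonneg x) (le_max_left 0 R)
    ((hypDist_lt_of_mem_geoBall hx).le.trans (le_max_right 0 R))

lemma apply_hypDist_lt_of_mem_geoBall (hv : StrictMonoOn v (Ici 0))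
    {x : EuclideanSpace ℝ (Fin n)} (hx : x ∈ geoBall n R) : v (hypDist n x) < v (max 0 R) :=
  hv (hypDist_nonneg x) (le_max_left 0 R)
    ((hypDist_lt_of_mem_geoBall hx).trans_le (le_max_right 0 R))

lemma le_apply_hypDist_of_notMem_geoBall (hv : MonotoneOn v (Ici 0))
    {x : EuclideanSpace ℝ (Fin n)} (hx : ‖x‖ < 1) (hxB : x ∉ geoBall n R) :
    v (max 0 R) ≤ v (hypDist n x) :=
  hv (le_max_left 0 R) (hypDist_nonneg x)
    (max_le (hypDist_nonneg x) (le_hypDist_of_notMem_geoBall hx hxB))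

theorem setIntegral_geoBall_le_of_monotoneOn (hφ : Continuous φ) (hΩ : MeasurableSet Ω)
    (hΩ_sub : closure Ω ⊆ ball 0 1) (hvol : hypWMeasure n φ Ω = hypWMeasure n φ (geoBall n R))
    (hv : MonotoneOn v (Ici 0)) :
    ∫ x in geoBall n R, v (hypDist n x) ∂(hypWMeasure n φ) ≤
      ∫ x in Ω, v (hypDist n x) ∂(hypWMeasure n φ) :=
  setIntegral_le_setIntegral_of_sdiff_le_of_le hΩ measurableSet_ball hvol
    (hypWMeasure_lt_top hφ hΩ_sub).ne (integrableOn_comp_hypDist hφ hΩ_sub hv)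
    (integrableOn_comp_hypDist hφ (closure_geoBall_subset_ball R) hv)
    (fun _ hx => apply_hypDist_le_of_mem_geoBall hv hx.1)
    (fun _ hx => le_apply_hypDist_of_notMem_geoBall hv
      (mem_ball_zero_iff.1 (hΩ_sub (subset_closure hx.1))) hx.2)

theorem setIntegral_eq_setIntegral_geoBall_iff_of_strictMonoOn (hφ : Continuous φ)
    (hΩ : MeasurableSet Ω) (hΩ_sub : closure Ω ⊆ ball 0 1)
    (hvol : hypWMeasure n φ Ω = hypWMeasure n φ (geoBall n R)) (hv : StrictMonoOn v (Ici 0)) :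
    ∫ x in Ω, v (hypDist n x) ∂(hypWMeasure n φ) =
        ∫ x in geoBall n R, v (hypDist n x) ∂(hypWMeasure n φ) ↔
      volume (symmDiff Ω (geoBall n R)) = 0 := by
  have hΩ1 : Ω ⊆ ball 0 1 := subset_closure.trans hΩ_sub
  have hB1 : geoBall n R ⊆ ball 0 1 := subset_closure.trans (closure_geoBall_subset_ball R)
  rw [setIntegral_eq_setIntegral_iff_of_sdiff_lt_of_le (t := geoBall n R) hΩ measurableSet_ball
    hvol (hypWMeasure_lt_top hφ hΩ_sub).ne (integrableOn_comp_hypDist hφ hΩ_sub hv.monotoneOn)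
    (integrableOn_comp_hypDist hφ (closure_geoBall_subset_ball R) hv.monotoneOn)
    (fun _ hx => apply_hypDist_lt_of_mem_geoBall hv hx.1)
    (fun _ hx => le_apply_hypDist_of_notMem_geoBall hv.monotoneOn
      (mem_ball_zero_iff.1 (hΩ1 hx.1)) hx.2)]
  exact hypWMeasure_eq_zero_iff hφ.measurable
    (union_subset (sdiff_subset.trans hΩ1) (sdiff_subset.trans hB1))

end Comparison

theorem hypWMeasure_radial_integral_comparison_general
    (n : ℕ) (φ : ℝ → ℝ) (hφ : Continuous φ)
    (Ω : Set (EuclideanSpace ℝ (Fin n)))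
    (hΩ_meas : MeasurableSet Ω)
    (hΩ_sub : closure Ω ⊆ ball (0 : EuclideanSpace ℝ (Fin n)) 1)
    (R : ℝ)
    (hvol : hypWMeasure n φ Ω = hypWMeasure n φ (geoBall n R)) :
    (∀ v : ℝ → ℝ, MonotoneOn v (Ici 0) →
      (∀ M : ℝ, ∃ C : ℝ, ∀ t ∈ Icc (0 : ℝ) M, |v t| ≤ C) →
      (∫ x in Ω, v (hypDist n x) ∂(hypWMeasure n φ)) ≥
        ∫ x in geoBall n R, v (hypDist n x) ∂(hypWMeasure n φ)) ∧
    (∀ u : ℝ → ℝ, AntitoneOn u (Ici 0) →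
      (∀ M : ℝ, ∃ C : ℝ, ∀ t ∈ Icc (0 : ℝ) M, |u t| ≤ C) →
      (∫ x in Ω, u (hypDist n x) ∂(hypWMeasure n φ)) ≤
        ∫ x in geoBall n R, u (hypDist n x) ∂(hypWMeasure n φ)) ∧
    (∀ v : ℝ → ℝ, StrictMonoOn v (Ici 0) →
      (∀ M : ℝ, ∃ C : ℝ, ∀ t ∈ Icc (0 : ℝ) M, |v t| ≤ C) →
      ((∫ x in Ω, v (hypDist n x) ∂(hypWMeasure n φ)) =
        (∫ x in geoBall n R, v (hypDist n x) ∂(hypWMeasure n φ)) ↔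
        volume (symmDiff Ω (geoBall n R)) = 0)) ∧
    (∀ u : ℝ → ℝ, StrictAntiOn u (Ici 0) →
      (∀ M : ℝ, ∃ C : ℝ, ∀ t ∈ Icc (0 : ℝ) M, |u t| ≤ C) →
      ((∫ x in Ω, u (hypDist n x) ∂(hypWMeasure n φ)) =
        (∫ x in geoBall n R, u (hypDist n x) ∂(hypWMeasure n φ)) ↔
        volume (symmDiff Ω (geoBall n R)) = 0)) := by
  refine ⟨fun v hv _ => setIntegral_geoBall_le_of_monotoneOn hφ hΩ_meas hΩ_sub hvol hv,
    fun u hu _ => ?_,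
    fun v hv _ => setIntegral_eq_setIntegral_geoBall_iff_of_strictMonoOn hφ hΩ_meas hΩ_sub hvol hv,
    fun u hu _ => ?_⟩
  · have := setIntegral_geoBall_le_of_monotoneOn hφ hΩ_meas hΩ_sub hvol hu.neg
    simp only [integral_neg] at this
    linarith
  · rw [← neg_inj, ← integral_neg, ← integral_neg]
    exact setIntegral_eq_setIntegral_geoBall_iff_of_strictMonoOn hφ hΩ_meas hΩ_sub hvol hu.neg

/-- **Lemma 4.4 (hyperbolic case)**: if `Ω ⊆ 𝔹ⁿ` is a measurable set with compact closure
contained in the Poincaré ball and with the same weighted volume as the geodesic ball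
`B_R(o)`, then for every nondecreasing `v` (bounded on bounded sets)
`∫_Ω v(d(x)) dη_φ ≥ ∫_{B_R(o)} v(d(x)) dη_φ`, and for every nonincreasing `u` (bounded on
bounded sets) `∫_Ω u(d(x)) dη_φ ≤ ∫_{B_R(o)} u(d(x)) dη_φ`; moreover, for strictly
monotone `v` (resp. `u`), equality holds if and only if the symmetric difference of `Ω`
and `B_R(o)` is Lebesgue-null. -/
theorem hypWMeasure_radial_integral_comparison
    (n : ℕ) (hn : 2 ≤ n) (φ : ℝ → ℝ) (hφ : Continuous φ)
    (Ω : Set (EuclideanSpace ℝ (Fin n)))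
    (hΩ_meas : MeasurableSet Ω)
    (hΩ_cpt : IsCompact (closure Ω))
    (hΩ_sub : closure Ω ⊆ ball (0 : EuclideanSpace ℝ (Fin n)) 1)
    (R : ℝ) (hR : 0 < R)
    (hvol : hypWMeasure n φ Ω = hypWMeasure n φ (geoBall n R)) :
    (∀ v : ℝ → ℝ, MonotoneOn v (Ici 0) →
      (∀ M : ℝ, ∃ C : ℝ, ∀ t ∈ Icc (0 : ℝ) M, |v t| ≤ C) →
      (∫ x in Ω, v (hypDist n x) ∂(hypWMeasure n φ)) ≥
        ∫ x in geoBall n R, v (hypDist n x) ∂(hypWMeasure n φ)) ∧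
    (∀ u : ℝ → ℝ, AntitoneOn u (Ici 0) →
      (∀ M : ℝ, ∃ C : ℝ, ∀ t ∈ Icc (0 : ℝ) M, |u t| ≤ C) →
      (∫ x in Ω, u (hypDist n x) ∂(hypWMeasure n φ)) ≤
        ∫ x in geoBall n R, u (hypDist n x) ∂(hypWMeasure n φ)) ∧
    (∀ v : ℝ → ℝ, StrictMonoOn v (Ici 0) →
      (∀ M : ℝ, ∃ C : ℝ, ∀ t ∈ Icc (0 : ℝ) M, |v t| ≤ C) →
      ((∫ x in Ω, v (hypDist n x) ∂(hypWMeasure n φ)) =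
        (∫ x in geoBall n R, v (hypDist n x) ∂(hypWMeasure n φ)) ↔
        volume (symmDiff Ω (geoBall n R)) = 0)) ∧
    (∀ u : ℝ → ℝ, StrictAntiOn u (Ici 0) →
      (∀ M : ℝ, ∃ C : ℝ, ∀ t ∈ Icc (0 : ℝ) M, |u t| ≤ C) →
      ((∫ x in Ω, u (hypDist n x) ∂(hypWMeasure n φ)) =
        (∫ x in geoBall n R, u (hypDist n x) ∂(hypWMeasure n φ)) ↔
        volume (symmDiff Ω (geoBall n R)) = 0)) :=
  hypWMeasure_radial_integral_comparison_general n φ hφ Ω hΩ_meas hΩ_sub R hvol
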